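/- arXiv:2605.30835 — 5 statements merged into one kernel-verified Lean document; each statement's English description precedes it below -/
import Mathlib

section
/- Let X, Y, Z be topological spaces and let f : X → Y and g : Y → Z be continuous maps. Then 𝓔(g) © 𝓔(f) ⊆ 𝓔(g ∘ f) as subgroups of 𝓔(X) × 𝓔(Z). (The assignment 𝓔 is a Lax functor.) -/
/-- The setoid on `C(X, Y)` given by the homotopy relation. -/
def homotopicSetoid (X Y : Type*) [TopologicalSpace X] [TopologicalSpace Y] :
    Setoid C(X, Y) :=
  ⟨ContinuousMap.Homotopic, ContinuousMap.Homotopic.equivalence⟩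

/-- The set `[X, Y]` of (free) homotopy classes of continuous maps from `X` to `Y`. -/
abbrev HClass (X Y : Type*) [TopologicalSpace X] [TopologicalSpace Y] :=
  Quotient (homotopicSetoid X Y)

/-- The homotopy class of a continuous map. -/
def hcl {X Y : Type*} [TopologicalSpace X] [TopologicalSpace Y] (f : C(X, Y)) : HClass X Y :=
  Quotient.mk (homotopicSetoid X Y) f

namespace HClass

variable {W X Y Z : Type*} [TopologicalSpace W] [TopologicalSpace X] [TopologicalSpace Y]
  [TopologicalSpace Z]

/-- Composition of homotopy classes. -/
def comp (g : HClass Y Z) (f : HClass X Y) : HClass X Z :=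
  Quotient.map₂ ContinuousMap.comp
    (fun _ _ hg _ _ hf => ContinuousMap.Homotopic.comp hg hf) g f

theorem comp_mk (g : C(Y, Z)) (f : C(X, Y)) : comp (hcl g) (hcl f) = hcl (g.comp f) := rfl

theorem comp_assoc (a : HClass Y Z) (b : HClass X Y) (c : HClass W X) :
    comp (comp a b) c = comp a (comp b c) :=
  Quotient.inductionOn₃ a b c fun _ _ _ => rfl

theorem id_comp (a : HClass X Y) : comp (hcl (ContinuousMap.id Y)) a = a :=
  Quotient.inductionOn a fun f => congrArg (Quotient.mk _) (ContinuousMap.id_comp f)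

theorem comp_id (a : HClass X Y) : comp a (hcl (ContinuousMap.id X)) = a :=
  Quotient.inductionOn a fun f => congrArg (Quotient.mk _) (ContinuousMap.comp_id f)

/-- The monoid `[X, X]` of homotopy classes of self-maps under composition. -/
instance monoid (X : Type*) [TopologicalSpace X] : Monoid (HClass X X) where
  mul a b := comp a b
  one := hcl (ContinuousMap.id X)
  mul_assoc := comp_assoc
  one_mul := id_comp
  mul_one := comp_id

theorem mul_def (a b : HClass X X) : a * b = comp a b := rfl
theorem one_def : (1 : HClass X X) = hcl (ContinuousMap.id X) := rfl

theorem unit_inv_comp (u : (HClass Y Y)ˣ) (a : HClass X Y) :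
    comp (↑u⁻¹ : HClass Y Y) (comp (↑u : HClass Y Y) a) = a := by
  rw [← comp_assoc]
  have h : comp (↑u⁻¹ : HClass Y Y) (↑u : HClass Y Y) = 1 := u.inv_mul
  rw [h]
  exact id_comp a

theorem comp_unit_inv (u : (HClass X X)ˣ) (a : HClass X Y) :
    comp (comp a (↑u : HClass X X)) (↑u⁻¹ : HClass X X) = a := by
  rw [comp_assoc]
  have h : comp (↑u : HClass X X) (↑u⁻¹ : HClass X X) = 1 := u.mul_inv
  rw [h]
  exact comp_id a

end HClass

/-- `𝓔(X)`, the group of homotopy classes of homotopy self-equivalences of `X`: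
the group of units of the monoid `[X, X]`. -/
abbrev SelfEqGroup (X : Type*) [TopologicalSpace X] := (HClass X X)ˣ

section EMap

variable {X Y : Type*} [TopologicalSpace X] [TopologicalSpace Y]

/-- `𝓔(f)`, the subgroup of `𝓔(X) × 𝓔(Y)` of pairs `([h_X], [h_Y])` with
`f ∘ h_X` homotopic to `h_Y ∘ f`. -/
def EMap (f : C(X, Y)) : Subgroup (SelfEqGroup X × SelfEqGroup Y) where
  carrier := { p | HClass.comp (hcl f) ↑p.1 = HClass.comp ↑p.2 (hcl f) }
  one_mem' := by
    show HClass.comp (hcl f) ((1 : SelfEqGroup X) : HClass X X)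
      = HClass.comp ((1 : SelfEqGroup Y) : HClass Y Y) (hcl f)
    rw [Units.val_one, Units.val_one, HClass.one_def, HClass.one_def,
      HClass.comp_id, HClass.id_comp]
  mul_mem' := by
    rintro p q hp hq
    have hp' : HClass.comp (hcl f) ↑p.1 = HClass.comp ↑p.2 (hcl f) := hp
    have hq' : HClass.comp (hcl f) ↑q.1 = HClass.comp ↑q.2 (hcl f) := hq
    show HClass.comp (hcl f) ↑(p.1 * q.1) = HClass.comp ↑(p.2 * q.2) (hcl f)
    rw [Units.val_mul, Units.val_mul, HClass.mul_def, HClass.mul_def,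
      ← HClass.comp_assoc, hp', HClass.comp_assoc, hq', ← HClass.comp_assoc]
  inv_mem' := by
    rintro p hp
    have hp' : HClass.comp (hcl f) ↑p.1 = HClass.comp ↑p.2 (hcl f) := hp
    show HClass.comp (hcl f) ↑p.1⁻¹ = HClass.comp ↑p.2⁻¹ (hcl f)
    calc HClass.comp (hcl f) (↑p.1⁻¹ : HClass X X)
        = HClass.comp (↑p.2⁻¹ : HClass Y Y)
            (HClass.comp (↑p.2 : HClass Y Y)
              (HClass.comp (hcl f) (↑p.1⁻¹ : HClass X X))) :=
          (HClass.unit_inv_comp p.2 _).symm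
      _ = HClass.comp (↑p.2⁻¹ : HClass Y Y)
            (HClass.comp (HClass.comp (↑p.2 : HClass Y Y) (hcl f))
              (↑p.1⁻¹ : HClass X X)) := by
          rw [HClass.comp_assoc]
      _ = HClass.comp (↑p.2⁻¹ : HClass Y Y)
            (HClass.comp (HClass.comp (hcl f) (↑p.1 : HClass X X))
              (↑p.1⁻¹ : HClass X X)) := by
          rw [hp']
      _ = HClass.comp (↑p.2⁻¹ : HClass Y Y) (hcl f) := by
          rw [HClass.comp_unit_inv]

end EMap

/-- The composition `S' © S` of two group correspondences. -/
def Subgroup.corrComp {G F K : Type*} [Group G] [Group F] [Group K]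
    (S' : Subgroup (F × K)) (S : Subgroup (G × F)) : Subgroup (G × K) where
  carrier := { p : G × K | ∃ f : F, (p.1, f) ∈ S ∧ (f, p.2) ∈ S' }
  one_mem' := ⟨1, S.one_mem, S'.one_mem⟩
  mul_mem' := by
    rintro p q ⟨a, ha1, ha2⟩ ⟨b, hb1, hb2⟩
    exact ⟨a * b, S.mul_mem ha1 hb1, S'.mul_mem ha2 hb2⟩
  inv_mem' := by
    rintro p ⟨a, ha1, ha2⟩
    exact ⟨a⁻¹, S.inv_mem ha1, S'.inv_mem ha2⟩

theorem mem_EMap_iff {X Y : Type*} [TopologicalSpace X] [TopologicalSpace Y] (f : C(X, Y))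
    (p : SelfEqGroup X × SelfEqGroup Y) :
    p ∈ EMap f ↔ HClass.comp (hcl f) ↑p.1 = HClass.comp ↑p.2 (hcl f) :=
  Iff.rfl

namespace HClass

variable {X₀ Y₀ Z₀ X Y Z : Type*} [TopologicalSpace X₀] [TopologicalSpace Y₀]
  [TopologicalSpace Z₀] [TopologicalSpace X] [TopologicalSpace Y] [TopologicalSpace Z]

theorem comp_comp_of_comm {f₀ : HClass X₀ Y₀} {g₀ : HClass Y₀ Z₀} {f : HClass X Y}
    {g : HClass Y Z} {a : HClass X₀ X} {b : HClass Y₀ Y} {c : HClass Z₀ Z}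
    (hf : comp f a = comp b f₀) (hg : comp g b = comp c g₀) :
    comp (comp g f) a = comp c (comp g₀ f₀) := by
  rw [comp_assoc, hf, ← comp_assoc, hg, comp_assoc]

end HClass

/-- for continuous maps `f : X → Y` and `g : Y → Z`, we have
`𝓔(g) © 𝓔(f) ⊆ 𝓔(g ∘ f)` as subgroups of `𝓔(X) × 𝓔(Z)` (the assignment `𝓔`
is a Lax functor). -/
theorem EMap_comp_le {X Y Z : Type*} [TopologicalSpace X] [TopologicalSpace Y]
    [TopologicalSpace Z] (f : C(X, Y)) (g : C(Y, Z)) :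
    (EMap g).corrComp (EMap f) ≤ EMap (g.comp f) := by
  rintro ⟨u, w⟩ ⟨v, hf, hg⟩
  rw [mem_EMap_iff] at hf hg ⊢
  rw [← HClass.comp_mk]
  exact HClass.comp_comp_of_comm hf hg
end

section
/- Let X and Y be topological spaces with Y path connected, and let f : X → Y be a continuous map that is homotopic to a constant map. Then 𝓔(f) = 𝓔(X) × 𝓔(Y), i.e., 𝓔(f) is the whole group 𝓔(X) × 𝓔(Y). -/
namespace HClass

variable {X Y Z : Type*} [TopologicalSpace X] [TopologicalSpace Y] [TopologicalSpace Z]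

theorem hcl_const_eq_hcl_const [PathConnectedSpace Y] (y y' : Y) :
    hcl (ContinuousMap.const X y) = hcl (ContinuousMap.const X y') :=
  Quotient.sound ⟨(PathConnectedSpace.somePath y y').toHomotopyConst⟩

theorem const_comp (z : Z) (a : HClass X Y) :
    comp (hcl (ContinuousMap.const Y z)) a = hcl (ContinuousMap.const X z) :=
  Quotient.inductionOn a fun g => congrArg hcl (ContinuousMap.const_comp z g)

theorem comp_const [PathConnectedSpace Z] (a : HClass Y Z) (y : Y) (z : Z) :
    comp a (hcl (ContinuousMap.const X y)) = hcl (ContinuousMap.const X z) :=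
  Quotient.inductionOn a fun g =>
    (congrArg hcl (ContinuousMap.comp_const g y)).trans (hcl_const_eq_hcl_const _ _)

end HClass

/-- if `Y` is path connected and `f : X → Y` is homotopic to a constant map,
then `𝓔(f) = 𝓔(X) × 𝓔(Y)`, i.e. `𝓔(f)` is the whole group `𝓔(X) × 𝓔(Y)`. -/
theorem EMap_of_homotopic_const {X Y : Type*} [TopologicalSpace X] [TopologicalSpace Y]
    [PathConnectedSpace Y] (f : C(X, Y))
    (hf : ∃ y₀ : Y, f.Homotopic (ContinuousMap.const X y₀)) :
    EMap f = ⊤ := by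
  obtain ⟨y₀, hfc⟩ := hf
  have hf_const : hcl f = hcl (ContinuousMap.const X y₀) := Quotient.sound hfc
  refine (Subgroup.eq_top_iff' _).2 fun p => ?_
  show HClass.comp (hcl f) ↑p.1 = HClass.comp ↑p.2 (hcl f)
  rw [hf_const, HClass.const_comp, HClass.comp_const _ y₀ y₀]
end

section
/- Let X and Y be topological spaces with Y path connected, suppose the group 𝓔(Y) is nontrivial, and let c : X → Y be a constant map. Then there is no group homomorphism φ : 𝓔(X) → 𝓔(Y) whose graph {(u, φ(u)) | u ∈ 𝓔(X)} equals 𝓔(c); i.e., c is not a strong 𝓔-map. -/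
section ConstantMaps

variable {W X Y Z : Type*} [TopologicalSpace W] [TopologicalSpace X] [TopologicalSpace Y]
  [TopologicalSpace Z]

theorem HClass.const_comp_s8 (y : Y) (a : HClass W X) :
    HClass.comp (hcl (ContinuousMap.const X y)) a = hcl (ContinuousMap.const W y) :=
  Quotient.inductionOn a fun _ => rfl

theorem hcl_const_eq_hcl_const [PathConnectedSpace Y] (y y' : Y) :
    hcl (ContinuousMap.const X y) = hcl (ContinuousMap.const X y') :=
  Quotient.sound ⟨(PathConnectedSpace.somePath y y').toHomotopyConst⟩

theorem HClass.comp_const_s8 [PathConnectedSpace Z] (a : HClass Y Z) (y : Y) (z : Z) :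
    HClass.comp a (hcl (ContinuousMap.const X y)) = hcl (ContinuousMap.const X z) :=
  Quotient.inductionOn a fun g => hcl_const_eq_hcl_const (g y) z

theorem EMap_const_eq_top [PathConnectedSpace Y] (y : Y) :
    EMap (ContinuousMap.const X y) = ⊤ := by
  refine eq_top_iff.2 fun p _ => ?_
  change HClass.comp _ _ = HClass.comp _ _
  rw [HClass.const_comp_s8, HClass.comp_const_s8]

end ConstantMaps

theorem MonoidHom.subsingleton_of_graph_eq_univ {G H : Type*} [MulOneClass G] [MulOneClass H]
    {φ : G →* H} (hφ : (Set.range fun u : G => (u, φ u)) = Set.univ) : Subsingleton H := by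
  suffices h : ∀ v : H, v = 1 from ⟨fun v w => (h v).trans (h w).symm⟩
  intro v
  obtain ⟨u, hu⟩ : ((1 : G), v) ∈ Set.range fun u : G => (u, φ u) := hφ ▸ Set.mem_univ _
  obtain ⟨rfl, rfl⟩ := Prod.mk.inj hu
  exact map_one φ

/-- if `Y` is path connected, `𝓔(Y)` is nontrivial and `c : X → Y` is a
constant map, then there is no group homomorphism `φ : 𝓔(X) → 𝓔(Y)` whose graph
`{(u, φ(u)) | u ∈ 𝓔(X)}` equals `𝓔(c)`; i.e. `c` is not a strong `𝓔`-map. -/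
theorem const_not_strong_E_map {X Y : Type*} [TopologicalSpace X] [TopologicalSpace Y]
    [PathConnectedSpace Y] (hY : Nontrivial (SelfEqGroup Y))
    (c : C(X, Y)) (hc : ∃ y₀ : Y, ∀ x : X, c x = y₀) :
    ¬ ∃ φ : SelfEqGroup X →* SelfEqGroup Y,
        (Set.range fun u : SelfEqGroup X => (u, φ u)) =
          (EMap c : Set (SelfEqGroup X × SelfEqGroup Y)) := by
  rintro ⟨φ, hφ⟩
  obtain ⟨y₀, hy₀⟩ := hc
  obtain rfl : c = ContinuousMap.const X y₀ := ContinuousMap.ext hy₀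
  rw [EMap_const_eq_top, Subgroup.coe_top] at hφ
  exact @not_subsingleton _ hY (MonoidHom.subsingleton_of_graph_eq_univ hφ)
end

section
/- Let f : X → Y be a continuous map between topological spaces and let Γ_f = {(x,y) ∈ X × Y | y = f(x)} carry the subspace topology of X × Y, with the continuous projections p₁ : Γ_f → X and p₂ : Γ_f → Y. Let 𝓔(p₁)ᵗ = {(a,b) ∈ 𝓔(X) × 𝓔(Γ_f) | (b,a) ∈ 𝓔(p₁)} be the transpose of 𝓔(p₁) ≤ 𝓔(Γ_f) × 𝓔(X). Then 𝓔(p₂) © 𝓔(p₁)ᵗ = 𝓔(f) as subgroups of 𝓔(X) × 𝓔(Y). -/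
/-- The transpose of a subgroup of `A × B`, a subgroup of `B × A`. -/
def Subgroup.transpose {A B : Type*} [Group A] [Group B] (S : Subgroup (A × B)) :
    Subgroup (B × A) where
  carrier := { p : B × A | (p.2, p.1) ∈ S }
  one_mem' := S.one_mem
  mul_mem' := fun ha hb => S.mul_mem ha hb
  inv_mem' := fun ha => S.inv_mem ha

/-- The graph `Γ_f = {(x, y) ∈ X × Y | y = f x}` of `f`, with the subspace topology. -/
abbrev GraphSpace {X Y : Type*} [TopologicalSpace X] [TopologicalSpace Y] (f : C(X, Y)) :
    Type _ :=
  { p : X × Y // p.2 = f p.1 }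

/-- The first projection `p₁ : Γ_f → X`. -/
def graphProj₁ {X Y : Type*} [TopologicalSpace X] [TopologicalSpace Y] (f : C(X, Y)) :
    C(GraphSpace f, X) :=
  ⟨fun q => q.val.1, continuous_fst.comp continuous_subtype_val⟩

/-- The second projection `p₂ : Γ_f → Y`. -/
def graphProj₂ {X Y : Type*} [TopologicalSpace X] [TopologicalSpace Y] (f : C(X, Y)) :
    C(GraphSpace f, Y) :=
  ⟨fun q => q.val.2, continuous_snd.comp continuous_subtype_val⟩

/-! `p₁ : Γ_f → X` is a homeomorphism and `p₂ = f ∘ p₁`, so it suffices to compose any map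
`g : X → Y` with a homotopy equivalence `φ : Z → X`, with homotopy inverse `ψ`. The pairs in
`𝓔(φ)` are exactly `(ψ a φ, a)`, so `𝓔(g ∘ φ) © 𝓔(φ)ᵗ` consists of the `(a, c)` with
`g φ ψ a φ ≃ c g φ`, i.e. `g a φ ≃ c g φ`; cancelling `φ` on the right up to homotopy leaves
`g a ≃ c g`. -/

theorem Subgroup.mem_corrComp {G F K : Type*} [Group G] [Group F] [Group K]
    {S' : Subgroup (F × K)} {S : Subgroup (G × F)} {p : G × K} :
    p ∈ S'.corrComp S ↔ ∃ f : F, (p.1, f) ∈ S ∧ (f, p.2) ∈ S' :=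
  Iff.rfl

theorem Subgroup.mem_transpose {A B : Type*} [Group A] [Group B] {S : Subgroup (A × B)}
    {p : B × A} : p ∈ S.transpose ↔ (p.2, p.1) ∈ S :=
  Iff.rfl

section EMapHomotopyEquiv

open scoped ContinuousMap

variable {X Y Z : Type*} [TopologicalSpace X] [TopologicalSpace Y] [TopologicalSpace Z]

theorem mem_EMap {f : C(X, Y)} {p : SelfEqGroup X × SelfEqGroup Y} :
    p ∈ EMap f ↔ HClass.comp (hcl f) ↑p.1 = HClass.comp ↑p.2 (hcl f) :=
  Iff.rfl

namespace HClass

theorem hcl_symm_comp_hcl (e : Z ≃ₕ X) :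
    comp (hcl e.symm.toFun) (hcl e.toFun) = hcl (ContinuousMap.id Z) :=
  Quotient.sound e.left_inv

theorem hcl_comp_hcl_symm (e : Z ≃ₕ X) :
    comp (hcl e.toFun) (hcl e.symm.toFun) = hcl (ContinuousMap.id X) :=
  Quotient.sound e.right_inv

theorem comp_hcl_injective (e : Z ≃ₕ X) :
    Function.Injective fun u : HClass X Y => comp u (hcl e.toFun) := by
  intro u v huv
  have hcancel (w : HClass X Y) : comp (comp w (hcl e.toFun)) (hcl e.symm.toFun) = w := by
    rw [comp_assoc, hcl_comp_hcl_symm, comp_id]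
  rw [← hcancel u, ← hcancel v]
  exact congrArg (comp · _) huv

def conjHClass (e : Z ≃ₕ X) : HClass X X →* HClass Z Z where
  toFun u := comp (hcl e.symm.toFun) (comp u (hcl e.toFun))
  map_one' := by simp only [one_def, id_comp, hcl_symm_comp_hcl]
  map_mul' u v := by
    simp only [mul_def, comp_assoc]
    rw [← comp_assoc (hcl e.toFun), hcl_comp_hcl_symm, id_comp]

theorem conjHClass_apply (e : Z ≃ₕ X) (u : HClass X X) :
    conjHClass e u = comp (hcl e.symm.toFun) (comp u (hcl e.toFun)) :=
  rfl

theorem mem_EMap_iff_eq_conj (e : Z ≃ₕ X) {b : SelfEqGroup Z} {a : SelfEqGroup X} :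
    (b, a) ∈ EMap e.toFun ↔ b = Units.map (conjHClass e) a := by
  rw [mem_EMap, Units.ext_iff, Units.coe_map, conjHClass_apply]
  constructor
  · intro h
    rw [← h, ← comp_assoc, hcl_symm_comp_hcl, id_comp]
  · intro h
    rw [h, ← comp_assoc, hcl_comp_hcl_symm, id_comp]

theorem conj_mem_EMap_comp_iff (e : Z ≃ₕ X) (g : C(X, Y)) {a : SelfEqGroup X}
    {c : SelfEqGroup Y} :
    (Units.map (conjHClass e) a, c) ∈ EMap (g.comp e.toFun) ↔ (a, c) ∈ EMap g := by
  have hlhs : comp (hcl (g.comp e.toFun)) (conjHClass e a) =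
      comp (comp (hcl g) a) (hcl e.toFun) := by
    rw [conjHClass_apply, ← comp_mk, comp_assoc, ← comp_assoc (hcl e.toFun),
      hcl_comp_hcl_symm, id_comp, comp_assoc]
  have hrhs : comp (c : HClass Y Y) (hcl (g.comp e.toFun)) =
      comp (comp (c : HClass Y Y) (hcl g)) (hcl e.toFun) := by
    rw [← comp_mk, comp_assoc]
  rw [mem_EMap, mem_EMap, Units.coe_map, hlhs, hrhs]
  exact (comp_hcl_injective e).eq_iff

theorem corrComp_EMap_comp (e : Z ≃ₕ X) (g : C(X, Y)) :
    (EMap (g.comp e.toFun)).corrComp (EMap e.toFun).transpose = EMap g := by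
  ext ⟨a, c⟩
  simp only [Subgroup.mem_corrComp, Subgroup.mem_transpose, mem_EMap_iff_eq_conj]
  constructor
  · rintro ⟨b, rfl, hbc⟩
    exact (conj_mem_EMap_comp_iff e g).1 hbc
  · intro h
    exact ⟨_, rfl, (conj_mem_EMap_comp_iff e g).2 h⟩

end HClass

end EMapHomotopyEquiv

def graphHomeomorph {X Y : Type*} [TopologicalSpace X] [TopologicalSpace Y] (f : C(X, Y)) :
    GraphSpace f ≃ₜ X where
  toFun := graphProj₁ f
  invFun x := ⟨(x, f x), rfl⟩
  left_inv q := Subtype.ext (Prod.ext rfl q.prop.symm)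
  right_inv _ := rfl
  continuous_toFun := (graphProj₁ f).continuous
  continuous_invFun := (continuous_id.prodMk f.continuous).subtype_mk _

/-- for a continuous map `f : X → Y` with graph correspondence
`X ← Γ_f → Y`, we have `𝓔(p₂) © 𝓔(p₁)ᵗ = 𝓔(f)` as subgroups of `𝓔(X) × 𝓔(Y)`. -/
theorem EMap_graph {X Y : Type*} [TopologicalSpace X] [TopologicalSpace Y] (f : C(X, Y)) :
    (EMap (graphProj₂ f)).corrComp (EMap (graphProj₁ f)).transpose = EMap f := by
  have hp₂ : graphProj₂ f = f.comp (graphHomeomorph f).toHomotopyEquiv.toFun := by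
    ext q
    exact q.prop
  rw [hp₂]
  exact HClass.corrComp_EMap_comp (graphHomeomorph f).toHomotopyEquiv f
end

section
/- Let X be a path-connected topological space with a basepoint x₀. Let PX = {γ ∈ C([0,1], X) | γ(0) = x₀} with the subspace topology of the compact-open topology, let g : PX → X be the endpoint evaluation γ ↦ γ(1), let ΩX = {γ ∈ PX | γ(1) = x₀} with the subspace topology, and let f : ΩX → PX be the inclusion. Then 𝓔(g) © 𝓔(f) = 𝓔(g ∘ f); i.e., the loop-path fibration pair (f,g) is an 𝓔-strict-functor pair. -/
/-- The path space `PX = {γ ∈ C([0,1], X) | γ 0 = x₀}`, a subspace of `C([0,1], X)`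
with the compact-open topology. -/
abbrev PathSpc (X : Type*) [TopologicalSpace X] (x₀ : X) : Type _ :=
  { γ : C(unitInterval, X) // γ 0 = x₀ }

/-- The loop space `ΩX = {γ ∈ PX | γ 1 = x₀}`, a subspace of `PX`. -/
abbrev LoopSpc (X : Type*) [TopologicalSpace X] (x₀ : X) : Type _ :=
  { γ : PathSpc X x₀ // γ.val 1 = x₀ }

/-- The endpoint evaluation `g : PX → X`, `γ ↦ γ 1`. -/
def pathEval (X : Type*) [TopologicalSpace X] (x₀ : X) : C(PathSpc X x₀, X) :=
  ⟨fun γ => γ.val 1, (continuous_eval_const 1).comp continuous_subtype_val⟩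

/-- The inclusion `f : ΩX → PX`. -/
def loopIncl (X : Type*) [TopologicalSpace X] (x₀ : X) : C(LoopSpc X x₀, PathSpc X x₀) :=
  ⟨fun γ => γ.val, continuous_subtype_val⟩

namespace ContinuousMap

variable {X Y : Type*} [TopologicalSpace X] [TopologicalSpace Y]

theorem Nullhomotopic.homotopic [PathConnectedSpace Y] {f g : C(X, Y)}
    (hf : f.Nullhomotopic) (hg : g.Nullhomotopic) : f.Homotopic g := by
  obtain ⟨y, hy⟩ := hf
  obtain ⟨y', hy'⟩ := hg
  exact hy.trans (.trans ⟨(PathConnectedSpace.somePath y y').toHomotopyConst⟩ hy'.symm)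

theorem nullhomotopic_of_contractibleSpace [ContractibleSpace Y] (f : C(X, Y)) :
    f.Nullhomotopic :=
  (id_nullhomotopic Y).comp_left f

end ContinuousMap

/-- Shrinking every path `γ` onto its initial segment `γ|[0, t]` contracts the path space. -/
instance PathSpc.contractibleSpace {X : Type*} [TopologicalSpace X] (x₀ : X) :
    ContractibleSpace (PathSpc X x₀) := by
  let shrink : C((unitInterval × PathSpc X x₀) × unitInterval, X) :=
    ⟨fun q => q.1.2.val (q.1.1 * q.2), by fun_prop⟩
  have hstart (p) : shrink.curry p 0 = x₀ := by simpa [shrink] using p.2.2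
  let H : ContinuousMap.Homotopy (ContinuousMap.const _ ⟨ContinuousMap.const _ x₀, rfl⟩)
      (ContinuousMap.id (PathSpc X x₀)) :=
    { toContinuousMap := ⟨fun p => ⟨shrink.curry p, hstart p⟩,
        shrink.curry.continuous.subtype_mk hstart⟩
      map_zero_left := fun γ => by ext s; simpa [shrink] using γ.2
      map_one_left := fun γ => by ext s; simp [shrink] }
  exact (contractible_iff_id_nullhomotopic _).2 ⟨_, ⟨H.symm⟩⟩

theorem EMap_eq_top_of_nullhomotopic {X Y : Type*} [TopologicalSpace X] [TopologicalSpace Y]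
    [PathConnectedSpace Y] {f : C(X, Y)} (hf : f.Nullhomotopic) : EMap f = ⊤ := by
  have key (a : HClass X X) (b : HClass Y Y) : HClass.comp (hcl f) a = HClass.comp b (hcl f) :=
    Quotient.inductionOn₂ a b fun h k =>
      Quotient.sound ((hf.comp_left h).homotopic (hf.comp_right k))
  exact eq_top_iff.2 fun p _ => key p.1 p.2

theorem Subgroup.top_corrComp_top {G F K : Type*} [Group G] [Group F] [Group K] :
    (⊤ : Subgroup (F × K)).corrComp (⊤ : Subgroup (G × F)) = ⊤ :=
  eq_top_iff.2 fun _ _ => ⟨1, trivial, trivial⟩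

/- `PX` is contractible, so `f`, `g` and `g ∘ f` are nullhomotopic; nullhomotopic maps into a
path-connected space commute with everything up to homotopy, so all three `𝓔`'s are the full
product groups. -/
/-- for a path-connected space `X` with basepoint `x₀` and the loop-path
fibration `ΩX → PX → X`, one has `𝓔(g) © 𝓔(f) = 𝓔(g ∘ f)`; i.e. the loop-path
fibration pair `(f, g)` is an `𝓔`-strict-functor pair. -/
theorem EMap_loop_path_fibration {X : Type*} [TopologicalSpace X] [PathConnectedSpace X]
    (x₀ : X) :
    (EMap (pathEval X x₀)).corrComp (EMap (loopIncl X x₀)) =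
      EMap ((pathEval X x₀).comp (loopIncl X x₀)) := by
  have hg : (pathEval X x₀).Nullhomotopic :=
    (id_nullhomotopic (PathSpc X x₀)).comp_right (pathEval X x₀)
  rw [EMap_eq_top_of_nullhomotopic hg,
    EMap_eq_top_of_nullhomotopic (ContinuousMap.nullhomotopic_of_contractibleSpace _),
    EMap_eq_top_of_nullhomotopic (hg.comp_left _), Subgroup.top_corrComp_top]
end
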